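/- arXiv:2002.05145 — 2 statements merged into one kernel-verified Lean document; each statement's English description precedes it below -/
import Mathlib

section
/- Positive-unlabeled learning: let p ∈ (0,1), q ∈ (0,1), and let (X'_1,Y'_1),…,(X'_n,Y'_n) be i.i.d. from a distribution P' on X×{−1,+1} with P'{Y' = +1} = q. Set n'_+ = #{i : Y'_i = +1}, n'_− = n − n'_+. For a classifier g define R̃_{w*,n}(g) = (2p/q)(1/n)Σ_{i:Y'_i=+1} 1{g(X'_i)=−1} + (1/(1−q))(1/n)Σ_{i:Y'_i=−1} 1{g(X'_i)=+1} and R̃_{ŵ*,n}(g) = (2p/n'_+)Σ_{i:Y'_i=+1} 1{g(X'_i)=−1} + (1/n'_−)Σ_{i:Y'_i=−1} 1{g(X'_i)=+1}. Let ε ∈ (0,1/2) with q ∈ (ε, 1−ε). Then for every δ ∈ (0,1) and every n ≥ 2 log(2/δ)/ε², with probability at least 1−δ: 0 < n'_+ < n and, simultaneously for every measurable classifier g, |R̃_{ŵ*,n}(g) − R̃_{w*,n}(g)| ≤ (2(2p+1)/ε²)√(log(2/δ)/(2n)). -/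
open MeasureTheory

/-- Number of positive labels `n'₊` in the sample (labels encoded by `Bool`,
`true ↦ +1`, `false ↦ -1`). -/
def nPos {X : Type*} {n : ℕ} (ω : Fin n → X × Bool) : ℕ :=
  (Finset.univ.filter fun i => (ω i).2 = true).card

/-- `Σ_{i : Y'ᵢ = +1} 1{g(X'ᵢ) = -1}`. -/
noncomputable def posErr {X : Type*} {n : ℕ} (ω : Fin n → X × Bool) (g : X → Bool) : ℝ :=
  ∑ i, if (ω i).2 = true ∧ g (ω i).1 = false then (1:ℝ) else 0

/-- `Σ_{i : Y'ᵢ = -1} 1{g(X'ᵢ) = +1}`. -/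
noncomputable def negErr {X : Type*} {n : ℕ} (ω : Fin n → X × Bool) (g : X → Bool) : ℝ :=
  ∑ i, if (ω i).2 = false ∧ g (ω i).1 = true then (1:ℝ) else 0

/-!
The count `n'₊` is a sum of `n` independent indicators with mean `q`, so Hoeffding's inequality
gives `|n'₊ / n - q| ≤ τ := √(log (2/δ) / (2n))` with probability at least `1 - δ`, and the
assumption on `n` makes `τ ≤ ε / 2`, so both `n'₊` and `n'₋` are positive on that event. There the
two risks differ only through the weights: writing `A` for the positive error count, which is at
most `n'₊`, one has `|2p A / n'₊ - 2p A / (q n)| ≤ 2p |q - n'₊ / n| / q ≤ 2p τ / ε`, and likewise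
for the negative part, uniformly in the classifier `g`.
-/

open ProbabilityTheory

section Hoeffding

variable {α ι : Type*} [MeasurableSpace α] [Fintype ι] {P : Measure α} [IsProbabilityMeasure P]
  {f : α → ℝ} {a b : ℝ}

lemma hasSubgaussianMGF_sum_sub_integral_pi (hf : Measurable f) (hab : ∀ x, f x ∈ Set.Icc a b) :
    HasSubgaussianMGF (fun ω : ι → α => ∑ i, (f (ω i) - P[f]))
      (∑ _i : ι, (‖b - a‖₊ / 2) ^ 2) (Measure.pi fun _ => P) := by
  have hindep : iIndepFun (fun (i : ι) (ω : ι → α) => f (ω i) - P[f]) (Measure.pi fun _ => P) :=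
    iIndepFun_pi (X := fun _ x => f x - P[f]) fun _ => (hf.sub_const _).aemeasurable
  refine HasSubgaussianMGF.sum_of_iIndepFun hindep fun i _ => ?_
  have hcoord : HasSubgaussianMGF (fun x => f x - P[f]) ((‖b - a‖₊ / 2) ^ 2)
      ((Measure.pi fun _ : ι => P).map (Function.eval i)) := by
    rw [(measurePreserving_eval (fun _ : ι => P) i).map_eq]
    exact hasSubgaussianMGF_of_mem_Icc hf.aemeasurable (ae_of_all _ hab)
  exact HasSubgaussianMGF.of_map (Y := fun ω : ι → α => ω i)
    (measurable_pi_apply i).aemeasurable hcoord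

theorem measureReal_abs_sum_sub_integral_ge_le (hf : Measurable f)
    (hab : ∀ x, f x ∈ Set.Icc a b) {t : ℝ} (ht : 0 ≤ t) :
    (Measure.pi fun _ : ι => P).real {ω | t ≤ |∑ i, (f (ω i) - P[f])|} ≤
      2 * Real.exp (-2 * t ^ 2 / (Fintype.card ι * (b - a) ^ 2)) := by
  have h := hasSubgaussianMGF_sum_sub_integral_pi (ι := ι) (P := P) hf hab
  have hexp : Real.exp (-t ^ 2 / (2 * ((∑ _i : ι, (‖b - a‖₊ / 2) ^ 2 : NNReal) : ℝ))) =
      Real.exp (-2 * t ^ 2 / (Fintype.card ι * (b - a) ^ 2)) := by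
    congr 1
    push_cast
    rw [Real.norm_eq_abs, Finset.sum_const, Finset.card_univ, nsmul_eq_mul,
      show 2 * (Fintype.card ι * (|b - a| / 2) ^ 2) = Fintype.card ι * (b - a) ^ 2 / 2 by
        rw [div_pow, sq_abs]; ring,
      div_div_eq_mul_div]
    ring
  have hsplit : {ω : ι → α | t ≤ |∑ i, (f (ω i) - P[f])|} ⊆
      {ω | t ≤ ∑ i, (f (ω i) - P[f])} ∪
        {ω | t ≤ (-fun ω : ι → α => ∑ i, (f (ω i) - P[f])) ω} := by
    intro ω (hω : t ≤ |_|)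
    rcases le_abs'.mp hω with h | h
    · right
      simp only [Set.mem_ofPred_eq, Pi.neg_apply]
      linarith
    · exact Or.inl h
  calc _ ≤ _ := measureReal_mono hsplit
    _ ≤ _ := measureReal_union_le _ _
    _ ≤ _ := add_le_add (h.measure_ge_le ht) (h.neg.measure_ge_le ht)
    _ = _ := by rw [hexp]; ring

end Hoeffding

lemma ofReal_one_sub_le_measure_compl {Ω : Type*} [MeasurableSpace Ω] {μ : Measure Ω}
    [IsProbabilityMeasure μ] {s : Set Ω} {δ : ℝ} (h : μ.real s ≤ δ) :
    ENNReal.ofReal (1 - δ) ≤ μ sᶜ := by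
  refine ENNReal.ofReal_le_of_le_toReal ?_
  have := measureReal_union_le (μ := μ) s sᶜ
  rw [Set.union_compl_self, probReal_univ] at this
  rw [← measureReal_def]
  linarith

lemma abs_div_sub_div_mul_le {A m N r τ : ℝ} (hA : 0 ≤ A) (hAm : A ≤ m) (hm : 0 < m)
    (hN : 0 < N) (hr : 0 < r) (h : |m / N - r| ≤ τ) : |A / m - A / (r * N)| ≤ τ / r := by
  have hfactor : A / m - A / (r * N) = A / m * ((r - m / N) / r) := by
    field_simp
  rw [hfactor, abs_mul, abs_of_nonneg (div_nonneg hA hm.le), abs_div, abs_of_pos hr,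
    abs_sub_comm]
  calc A / m * (|m / N - r| / r) ≤ 1 * (τ / r) := by
        gcongr
        exact (div_le_one hm).mpr hAm
    _ = τ / r := one_mul _

lemma sqrt_div_two_mul_le_half {L ε N : ℝ} (hε : 0 < ε) (hN : 0 < N) (h : 2 * L / ε ^ 2 ≤ N) :
    Real.sqrt (L / (2 * N)) ≤ ε / 2 := by
  rw [div_le_iff₀ (by positivity)] at h
  refine Real.sqrt_le_iff.mpr ⟨by linarith, ?_⟩
  rw [div_le_iff₀ (by positivity)]
  nlinarith

section Sample

variable {X : Type*} {n : ℕ}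

/-- The plug-in weighted empirical risk `R̃_{ŵ*,n}(g)`. -/
noncomputable def pluginWeightedRisk (p : ℝ) (ω : Fin n → X × Bool) (g : X → Bool) : ℝ :=
  (2 * p / (nPos ω : ℝ)) * posErr ω g + (1 / ((n : ℝ) - (nPos ω : ℝ))) * negErr ω g

/-- The ideally weighted empirical risk `R̃_{w*,n}(g)`. -/
noncomputable def idealWeightedRisk (p q : ℝ) (ω : Fin n → X × Bool) (g : X → Bool) : ℝ :=
  (2 * p / q) * (1 / (n : ℝ)) * posErr ω g + (1 / (1 - q)) * (1 / (n : ℝ)) * negErr ω g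

lemma sum_ite_label_true_eq_nPos (ω : Fin n → X × Bool) :
    ∑ i, (if (ω i).2 = true then (1 : ℝ) else 0) = nPos ω := by
  rw [Finset.sum_boole, nPos]

lemma sum_ite_label_false_eq_sub_nPos (ω : Fin n → X × Bool) :
    ∑ i, (if (ω i).2 = false then (1 : ℝ) else 0) = n - nPos ω := by
  have hsplit : ∀ i, (if (ω i).2 = false then (1 : ℝ) else 0) =
      1 - if (ω i).2 = true then 1 else 0 := fun i => by cases (ω i).2 <;> simp
  simp only [hsplit, Finset.sum_sub_distrib, sum_ite_label_true_eq_nPos]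
  simp

lemma posErr_nonneg (ω : Fin n → X × Bool) (g : X → Bool) : 0 ≤ posErr ω g :=
  Finset.sum_nonneg fun _ _ => by positivity

lemma negErr_nonneg (ω : Fin n → X × Bool) (g : X → Bool) : 0 ≤ negErr ω g :=
  Finset.sum_nonneg fun _ _ => by positivity

lemma posErr_le_nPos (ω : Fin n → X × Bool) (g : X → Bool) : posErr ω g ≤ nPos ω := by
  rw [← sum_ite_label_true_eq_nPos]
  refine Finset.sum_le_sum fun i _ => ?_
  split_ifs <;> simp_all

lemma negErr_le_sub_nPos (ω : Fin n → X × Bool) (g : X → Bool) :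
    negErr ω g ≤ n - nPos ω := by
  rw [← sum_ite_label_false_eq_sub_nPos]
  refine Finset.sum_le_sum fun i _ => ?_
  split_ifs <;> simp_all

lemma nPos_pos_and_lt_of_abs_sub_lt {ω : Fin n → X × Bool} {q τ : ℝ}
    (h : |(nPos ω : ℝ) - n * q| < n * τ) (hτq : τ ≤ q) (hτq' : τ ≤ 1 - q) :
    0 < nPos ω ∧ nPos ω < n := by
  obtain ⟨hlow, hup⟩ := abs_lt.mp h
  have hn : (0 : ℝ) ≤ n := n.cast_nonneg
  have hpos : (0 : ℝ) < nPos ω := by nlinarith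
  have hlt : (nPos ω : ℝ) < n := by nlinarith
  exact ⟨by exact_mod_cast hpos, by exact_mod_cast hlt⟩

lemma abs_pluginWeightedRisk_sub_idealWeightedRisk_le {p q τ : ℝ} {ω : Fin n → X × Bool}
    (g : X → Bool) (hp : 0 ≤ p) (hq0 : 0 < q) (hq1 : q < 1) (hpos : 0 < nPos ω)
    (hlt : nPos ω < n) (hfreq : |(nPos ω : ℝ) / n - q| ≤ τ) :
    |pluginWeightedRisk p ω g - idealWeightedRisk p q ω g| ≤ 2 * p * (τ / q) + τ / (1 - q) := by
  have hm : (0 : ℝ) < nPos ω := by exact_mod_cast hpos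
  have hmN : (nPos ω : ℝ) < n := by exact_mod_cast hlt
  have hN : (0 : ℝ) < n := hm.trans hmN
  have hposPart := abs_div_sub_div_mul_le (posErr_nonneg ω g) (posErr_le_nPos ω g) hm hN hq0 hfreq
  have hnegPart : |negErr ω g / (n - nPos ω) - negErr ω g / ((1 - q) * n)| ≤ τ / (1 - q) := by
    refine abs_div_sub_div_mul_le (negErr_nonneg ω g) (negErr_le_sub_nPos ω g) (by linarith) hN
      (by linarith) ?_
    rwa [sub_div, div_self hN.ne', sub_sub_sub_cancel_left, abs_sub_comm]
  have hsplit : pluginWeightedRisk p ω g - idealWeightedRisk p q ω g =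
      2 * p * (posErr ω g / nPos ω - posErr ω g / (q * n)) +
        (negErr ω g / (n - nPos ω) - negErr ω g / ((1 - q) * n)) := by
    simp only [pluginWeightedRisk, idealWeightedRisk, div_eq_mul_inv, mul_inv]
    ring
  calc _ ≤ |2 * p * (posErr ω g / nPos ω - posErr ω g / (q * n))| +
        |negErr ω g / (n - nPos ω) - negErr ω g / ((1 - q) * n)| := hsplit ▸ abs_add_le _ _
    _ ≤ 2 * p * (τ / q) + τ / (1 - q) := by
        rw [abs_mul, abs_of_nonneg (by positivity)]
        gcongr

variable [MeasurableSpace X] {P : Measure (X × Bool)} [IsProbabilityMeasure P]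

theorem measureReal_abs_nPos_sub_ge_le {q t : ℝ} (hq : P {z | z.2 = true} = ENNReal.ofReal q)
    (hq0 : 0 ≤ q) (ht : 0 ≤ t) :
    (Measure.pi fun _ : Fin n => P).real {ω | t ≤ |(nPos ω : ℝ) - n * q|} ≤
      2 * Real.exp (-2 * t ^ 2 / n) := by
  have hmeas : Measurable fun z : X × Bool => if z.2 = true then (1 : ℝ) else 0 :=
    (measurable_of_countable fun b : Bool => if b = true then (1 : ℝ) else 0).comp measurable_snd
  have hmean : P[fun z : X × Bool => if z.2 = true then (1 : ℝ) else 0] = q := by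
    have hs : MeasurableSet {z : X × Bool | z.2 = true} :=
      measurableSet_eq_fun measurable_snd measurable_const
    calc _ = ∫ z, {z : X × Bool | z.2 = true}.indicator 1 z ∂P := by
          congr 1; ext z; simp [Set.indicator_apply]
      _ = q := by rw [integral_indicator_one hs, measureReal_def, hq, ENNReal.toReal_ofReal hq0]
  have h := measureReal_abs_sum_sub_integral_ge_le (ι := Fin n) (P := P) (a := 0) (b := 1) hmeas
    (fun z => by split_ifs <;> simp) ht
  simp only [hmean, Finset.sum_sub_distrib, sum_ite_label_true_eq_nPos] at h
  simpa using h

theorem measureReal_abs_nPos_sub_ge_sqrt_log_le {q δ : ℝ}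
    (hq : P {z | z.2 = true} = ENNReal.ofReal q) (hq0 : 0 ≤ q) (hn : 0 < n) (hδ0 : 0 < δ)
    (hδ2 : δ ≤ 2) :
    (Measure.pi fun _ : Fin n => P).real
        {ω | n * Real.sqrt (Real.log (2 / δ) / (2 * n)) ≤ |(nPos ω : ℝ) - n * q|} ≤ δ := by
  have hL : 0 ≤ Real.log (2 / δ) := Real.log_nonneg (by rw [le_div_iff₀ hδ0]; linarith)
  have hnR : (0 : ℝ) < n := by exact_mod_cast hn
  refine (measureReal_abs_nPos_sub_ge_le hq hq0 (by positivity)).trans_eq ?_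
  rw [mul_pow, Real.sq_sqrt (by positivity),
    show -2 * (n ^ 2 * (Real.log (2 / δ) / (2 * n))) / n = -Real.log (2 / δ) by field_simp,
    Real.exp_neg, Real.exp_log (div_pos two_pos hδ0), inv_div]
  ring

end Sample

theorem plugin_vs_ideal_weighted_risk_pu_general
    {X : Type*} [MeasurableSpace X]
    (p q : ℝ) (hp : p ∈ Set.Ioo (0:ℝ) 1)
    (P' : Measure (X × Bool)) [IsProbabilityMeasure P']
    (hP'q : P' {z : X × Bool | z.2 = true} = ENNReal.ofReal q)
    (ε : ℝ) (hε : ε ∈ Set.Ioo (0:ℝ) (1/2)) (hqε : q ∈ Set.Ioo ε (1 - ε))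
    (n : ℕ) (δ : ℝ) (hδ : δ ∈ Set.Ioo (0:ℝ) 1)
    (hn : 2 * Real.log (2 / δ) / ε ^ 2 ≤ (n : ℝ)) :
    ENNReal.ofReal (1 - δ) ≤
      (Measure.pi fun _ : Fin n => P')
        {ω | (0 < nPos ω ∧ nPos ω < n) ∧
          ∀ g : X → Bool, Measurable g →
            |((2 * p / (nPos ω : ℝ)) * posErr ω g +
                (1 / ((n : ℝ) - (nPos ω : ℝ))) * negErr ω g) -
              ((2 * p / q) * (1 / (n : ℝ)) * posErr ω g +
                (1 / (1 - q)) * (1 / (n : ℝ)) * negErr ω g)| ≤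
            (2 * (2 * p + 1) / ε ^ 2) * Real.sqrt (Real.log (2 / δ) / (2 * n))} := by
  obtain ⟨hp0, -⟩ := hp
  obtain ⟨hε0, -⟩ := hε
  obtain ⟨hqε, hqε'⟩ := hqε
  obtain ⟨hδ0, hδ1⟩ := hδ
  set τ := Real.sqrt (Real.log (2 / δ) / (2 * n))
  have hL : 0 < Real.log (2 / δ) := Real.log_pos (by rw [lt_div_iff₀ hδ0]; linarith)
  have hn0 : (0 : ℝ) < n := (by positivity : 0 < 2 * Real.log (2 / δ) / ε ^ 2).trans_le hn
  have hτε : τ ≤ ε / 2 := sqrt_div_two_mul_le_half hε0 hn0 hn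
  have hconst : (2 * p + 1) / ε ≤ 2 * (2 * p + 1) / ε ^ 2 := by
    rw [div_le_div_iff₀ hε0 (by positivity)]
    nlinarith [mul_pos (mul_pos (by positivity : (0 : ℝ) < 2 * p + 1) hε0)
      (by linarith : (0 : ℝ) < 2 - ε)]
  refine (ofReal_one_sub_le_measure_compl (measureReal_abs_nPos_sub_ge_sqrt_log_le hP'q
    (by linarith) (by exact_mod_cast hn0) hδ0 (by linarith))).trans (measure_mono fun ω hω => ?_)
  have hdev : |(nPos ω : ℝ) - n * q| < n * τ := not_le.mp hω
  have hfreq : |(nPos ω : ℝ) / n - q| ≤ τ := by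
    rw [← mul_div_cancel_left₀ q hn0.ne', ← sub_div, abs_div, abs_of_pos hn0, div_le_iff₀ hn0]
    linarith
  obtain ⟨hpos, hlt⟩ := nPos_pos_and_lt_of_abs_sub_lt hdev (by linarith) (by linarith)
  refine ⟨⟨hpos, hlt⟩, fun g _ => ?_⟩
  calc _ ≤ 2 * p * (τ / q) + τ / (1 - q) := abs_pluginWeightedRisk_sub_idealWeightedRisk_le g
        hp0.le (by linarith) (by linarith) hpos hlt hfreq
    _ ≤ (2 * p + 1) / ε * τ := by
        rw [add_div, add_mul, div_mul_eq_mul_div, div_mul_eq_mul_div, ← mul_div_assoc]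
        gcongr <;> linarith
    _ ≤ 2 * (2 * p + 1) / ε ^ 2 * τ := by gcongr

/-- Lemma 4: uniform control of the deviation between the plug-in
PU weighted empirical risk and the ideally weighted one, when the training
distribution `P'` on `X × {-1,+1}` has positive-label probability `q`. -/
theorem plugin_vs_ideal_weighted_risk_pu
    {X : Type*} [MeasurableSpace X]
    (p q : ℝ) (hp : p ∈ Set.Ioo (0:ℝ) 1) (hq : q ∈ Set.Ioo (0:ℝ) 1)
    (P' : Measure (X × Bool)) [IsProbabilityMeasure P']
    (hP'q : P' {z : X × Bool | z.2 = true} = ENNReal.ofReal q)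
    (ε : ℝ) (hε : ε ∈ Set.Ioo (0:ℝ) (1/2)) (hqε : q ∈ Set.Ioo ε (1 - ε))
    (n : ℕ) (δ : ℝ) (hδ : δ ∈ Set.Ioo (0:ℝ) 1)
    (hn : 2 * Real.log (2 / δ) / ε ^ 2 ≤ (n : ℝ)) :
    ENNReal.ofReal (1 - δ) ≤
      (Measure.pi fun _ : Fin n => P')
        {ω | (0 < nPos ω ∧ nPos ω < n) ∧
          ∀ g : X → Bool, Measurable g →
            |((2 * p / (nPos ω : ℝ)) * posErr ω g +
                (1 / ((n : ℝ) - (nPos ω : ℝ))) * negErr ω g) -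
              ((2 * p / q) * (1 / (n : ℝ)) * posErr ω g +
                (1 / (1 - q)) * (1 / (n : ℝ)) * negErr ω g)| ≤
            (2 * (2 * p + 1) / ε ^ 2) * Real.sqrt (Real.log (2 / δ) / (2 * n))} :=
  plugin_vs_ideal_weighted_risk_pu_general p q hp P' hP'q ε hε hqε n δ hδ hn
end

section
/- Positive-unlabeled learning: let X be a measurable space, p ∈ (0,1), q ∈ (0,1), F_+, F_− probability measures on X, and F = p F_+ + (1−p) F_−. Let P on X×{−1,+1} be described by (p, F_+, F_−) and P' by (q, F_+, F), i.e. P(A×{+1}) = p F_+(A), P(A×{−1}) = (1−p) F_−(A), P'(A×{+1}) = q F_+(A), P'(A×{−1}) = (1−q) F(A). Then for every measurable classifier g : X → {−1,+1}, the test misclassification risk satisfies R_P(g) = −p + E_{(X',Y')∼P'}[(2p/q) 1{g(X')=−1, Y'=+1} + (1/(1−q)) 1{g(X')=+1, Y'=−1}], where R_P(g) = P{(x,y) : g(x) ≠ y}. -/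
open MeasureTheory

/-- The distribution on `X × Bool` described by the triplet `(p, F₊, F₋)`:
labels are encoded by `Bool` with `true ↦ +1` and `false ↦ -1`, so that
`P(A × {+1}) = p F₊(A)` and `P(A × {-1}) = (1-p) F₋(A)`. -/
noncomputable def binMeasure {X : Type*} [MeasurableSpace X]
    (p : ℝ) (Fp Fm : Measure X) : Measure (X × Bool) :=
  ENNReal.ofReal p • Fp.map (fun x => (x, true)) +
    ENNReal.ofReal (1 - p) • Fm.map (fun x => (x, false))

/-!
Write `a = F₊{g = -1}` and `b = F₋{g = +1}`. The test risk is `p a + (1 - p) b`. Under `P'` the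
two events weighted in the integrand have probabilities `q a` and
`(1 - q) F{g = +1} = (1 - q) (p (1 - a) + (1 - p) b)`, so the weights `2p/q` and `1/(1-q)` turn the
expectation into `2 p a + p (1 - a) + (1 - p) b`, which is the risk plus `p`.
-/

namespace MeasureTheory.Measure

variable {α : Type*} [MeasurableSpace α]

instance isFiniteMeasure_ofReal_smul (μ : Measure α) [IsFiniteMeasure μ] {c : ℝ} :
    IsFiniteMeasure (ENNReal.ofReal c • μ) :=
  μ.smul_finite ENNReal.ofReal_ne_top

lemma real_ofReal_smul_add_ofReal_smul (μ ν : Measure α) [IsFiniteMeasure μ]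
    [IsFiniteMeasure ν] {a b : ℝ} (ha : 0 ≤ a) (hb : 0 ≤ b) (s : Set α) :
    (ENNReal.ofReal a • μ + ENNReal.ofReal b • ν).real s = a * μ.real s + b * ν.real s := by
  rw [measureReal_add_apply]
  simp [ha, hb]

end MeasureTheory.Measure

section binMeasure

variable {X : Type*} [MeasurableSpace X] {Fp Fm : Measure X} [IsFiniteMeasure Fp]
  [IsFiniteMeasure Fm]

instance isFiniteMeasure_binMeasure {r : ℝ} : IsFiniteMeasure (binMeasure r Fp Fm) := by
  unfold binMeasure; infer_instance

lemma binMeasure_real_apply {r : ℝ} (hr : r ∈ Set.Icc (0 : ℝ) 1) {S : Set (X × Bool)}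
    (hS : MeasurableSet S) :
    (binMeasure r Fp Fm).real S =
      r * Fp.real ((·, true) ⁻¹' S) + (1 - r) * Fm.real ((·, false) ⁻¹' S) := by
  rw [binMeasure, Measure.real_ofReal_smul_add_ofReal_smul _ _ hr.1 (sub_nonneg.2 hr.2),
    map_measureReal_apply measurable_prodMk_right hS,
    map_measureReal_apply measurable_prodMk_right hS]

end binMeasure

lemma integral_mul_ite_add_mul_ite {α : Type*} [MeasurableSpace α] (μ : Measure α)
    [IsFiniteMeasure μ] {P Q : α → Prop} [DecidablePred P] [DecidablePred Q]
    (hP : MeasurableSet {x | P x}) (hQ : MeasurableSet {x | Q x}) (a b : ℝ) :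
    ∫ x, (a * (if P x then (1 : ℝ) else 0) + b * (if Q x then (1 : ℝ) else 0)) ∂μ =
      a * μ.real {x | P x} + b * μ.real {x | Q x} := by
  have hind : ∀ (R : α → Prop) [DecidablePred R] x,
      (if R x then (1 : ℝ) else 0) = {x | R x}.indicator 1 x := fun R _ x => by
    simp [Set.indicator_apply]
  simp_rw [hind]
  have hint : ∀ (R : α → Prop), MeasurableSet {x | R x} →
      Integrable ({x | R x}.indicator (1 : α → ℝ)) μ := fun R hR => (integrable_const (1 : ℝ)).indicator hR
  rw [integral_add ((hint P hP).const_mul a) ((hint Q hQ).const_mul b),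
    integral_const_mul, integral_const_mul, integral_indicator_one hP, integral_indicator_one hQ]

/-- in the PU problem (test distribution `P = (p, F₊, F₋)`,
training distribution `P' = (q, F₊, F)` with `F = p F₊ + (1-p) F₋`), for every
measurable classifier `g`,
`R_P(g) = -p + E_{P'}[(2p/q) 1{g(X')=-1, Y'=+1} + (1/(1-q)) 1{g(X')=+1, Y'=-1}]`. -/
theorem pu_risk_identity
    {X : Type*} [MeasurableSpace X]
    (p q : ℝ) (hp : p ∈ Set.Ioo (0:ℝ) 1) (hq : q ∈ Set.Ioo (0:ℝ) 1)
    (Fp Fm : Measure X) [IsProbabilityMeasure Fp] [IsProbabilityMeasure Fm]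
    (g : X → Bool) (hg : Measurable g) :
    ((binMeasure p Fp Fm) {z : X × Bool | g z.1 ≠ z.2}).toReal =
      -p + ∫ z : X × Bool,
          ((2 * p / q) * (if g z.1 = false ∧ z.2 = true then (1:ℝ) else 0) +
            (1 / (1 - q)) * (if g z.1 = true ∧ z.2 = false then (1:ℝ) else 0))
        ∂(binMeasure q Fp (ENNReal.ofReal p • Fp + ENNReal.ofReal (1 - p) • Fm)) := by
  obtain ⟨hp0, hp1⟩ := hp
  obtain ⟨hq0, hq1⟩ := hq
  have hmeas : ∀ b c : Bool, MeasurableSet {z : X × Bool | g z.1 = b ∧ z.2 = c} :=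
    fun _ _ => by measurability
  have hne : MeasurableSet {z : X × Bool | g z.1 ≠ z.2} := by measurability
  have hcompl : Fp.real {x | g x = true} = 1 - Fp.real {x | g x = false} := by
    rw [← probReal_compl_eq_one_sub (s := {x | g x = false}) (hg (measurableSet_singleton false))]
    congr 1; ext; simp
  rw [← measureReal_def, integral_mul_ite_add_mul_ite _ (hmeas _ _) (hmeas _ _),
    binMeasure_real_apply ⟨hp0.le, hp1.le⟩ hne,
    binMeasure_real_apply ⟨hq0.le, hq1.le⟩ (hmeas _ _),
    binMeasure_real_apply ⟨hq0.le, hq1.le⟩ (hmeas _ _)]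
  simp only [ne_eq, Set.preimage_ofPred_eq, Bool.not_eq_true, Bool.not_eq_false, and_true,
    Bool.false_eq_true, and_false, Set.ofPred_false, measureReal_empty, mul_zero, add_zero,
    Bool.true_eq_false, zero_add]
  rw [Measure.real_ofReal_smul_add_ofReal_smul _ _ hp0.le (sub_nonneg.2 hp1.le), hcompl]
  field_simp [hq0.ne', (sub_pos.2 hq1).ne']
  ring
end
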